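/- Rapid mixing of the Glauber dynamics: assume k ≥ 2D + 1. Then, setting β = 1 - 1/n + 2D/(k·n), we have β < 1, and for every T : ℕ and every pair of valid colorings w₁, w₂, TV(glauberStep^{(T)}(w₁), glauberStep^{(T)}(w₂)) ≤ β^T · n. -/

import Mathlib

open scoped ENNReal

/-- Total variation distance between two PMFs. -/
noncomputable def TV {A : Type*} (μ₁ μ₂ : PMF A) : ℝ :=
  (1 / 2) * ∑' a, |(μ₁ a).toReal - (μ₂ a).toReal|

/-- `iter f t s` is the `t`-fold monadic iterate of `f` starting from the point mass at `s`. -/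
noncomputable def iter {Ω : Type*} (f : Ω → PMF Ω) : ℕ → Ω → PMF Ω
  | 0, s => PMF.pure s
  | t + 1, s => (iter f t s).bind f

/-- A coloring is valid (proper) if adjacent vertices get distinct colors. -/
def validCol {V C : Type*} (G : SimpleGraph V) (w : V → C) : Prop :=
  ∀ u v, G.Adj u v → w u ≠ w v

instance {V C : Type*} [Fintype V] [DecidableEq C] (G : SimpleGraph V)
    [DecidableRel G.Adj] (w : V → C) : Decidable (validCol G w) :=
  inferInstanceAs (Decidable (∀ u v, G.Adj u v → w u ≠ w v))

/-- One step of the Glauber dynamics: resample a uniformly random vertex with a uniformly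
random color, keeping the change only if the result is a valid coloring. -/
noncomputable def glauberStep {V C : Type*} [Fintype V] [Nonempty V] [DecidableEq V]
    [Fintype C] [Nonempty C] [DecidableEq C]
    (G : SimpleGraph V) [DecidableRel G.Adj] (w : V → C) : PMF (V → C) :=
  (PMF.uniformOfFintype V).bind fun v =>
    (PMF.uniformOfFintype C).bind fun c =>
      PMF.pure (if validCol G (Function.update w v c) then Function.update w v c else w)

/-! Jerrum's coupling. Both chains resample the same vertex `u`; the first proposes a uniform
colour `c`, the second the colour `σ c`, where the permutation `σ` matches as many colours
forbidden at `u` only in the first chain as possible with colours forbidden only in the second,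
and fixes every other colour. If `u` is a disagreeing vertex, the chains then agree at `u` except
for the at most `D + #(disagreeing neighbours of u)` colours forbidden in one of them; if `u` is
an agreeing vertex, they come to disagree at `u` for at most `#(disagreeing neighbours of u)`
colours. Summing over `u`, and counting each disagreeing vertex once per neighbour, the expected
Hamming distance contracts by the factor `β = 1 - 1/n + 2D/(kn)` in each step, so after `T` steps
it is at most `β ^ T * n`, and the coupling inequality bounds the total variation distance by the
probability that the coupled colourings differ, hence by their expected Hamming distance. -/

open Finset Function

namespace PMF

variable {Ω Ω' : Type*}

lemma iter_succ' (f : Ω → PMF Ω) (t : ℕ) (x : Ω) :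
    iter f (t + 1) x = (f x).bind (iter f t) := by
  induction t generalizing x with
  | zero => simp [iter, pure_bind, bind_pure]
  | succ t ih => rw [iter, ih, bind_bind]; rfl

lemma map_iter {f : Ω → PMF Ω} {g : Ω' → PMF Ω'} {π : Ω → Ω'}
    (h : ∀ x, (f x).map π = g (π x)) (T : ℕ) (x : Ω) :
    (iter f T x).map π = iter g T (π x) := by
  induction T with
  | zero => exact pure_map π x
  | succ t ih => rw [iter, iter, map_bind, ← ih, bind_map]; simp_rw [comp_def, h]

variable [Fintype Ω]

noncomputable def expect (μ : PMF Ω) (g : Ω → ℝ) : ℝ := ∑ a, (μ a).toReal * g a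

lemma expect_pure [DecidableEq Ω] (x : Ω) (g : Ω → ℝ) : (pure x).expect g = g x := by
  simp [expect, pure_apply, apply_ite ENNReal.toReal]

lemma expect_bind [Fintype Ω'] (μ : PMF Ω) (f : Ω → PMF Ω') (g : Ω' → ℝ) :
    (μ.bind f).expect g = ∑ a, (μ a).toReal * (f a).expect g := by
  simp_rw [expect, bind_apply, tsum_fintype, mul_sum]
  rw [sum_comm]
  refine sum_congr rfl fun b _ => ?_
  rw [ENNReal.toReal_sum fun a _ => ENNReal.mul_ne_top (apply_ne_top μ a) (apply_ne_top _ b),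
    sum_mul]
  simp_rw [ENNReal.toReal_mul, mul_assoc]

lemma toReal_map_apply [DecidableEq Ω'] (κ : PMF Ω) (f : Ω → Ω') (b : Ω') :
    ((κ.map f) b).toReal = ∑ a, (κ a).toReal * if b = f a then 1 else 0 := by
  rw [map_apply, tsum_fintype, ENNReal.toReal_sum fun a _ => by
    split_ifs <;> simp [apply_ne_top]]
  simp only [apply_ite ENNReal.toReal, ENNReal.toReal_zero, mul_ite, mul_one, mul_zero]
  congr!

lemma expect_bind_uniformOfFintype [Nonempty Ω] [Fintype Ω'] (f : Ω → PMF Ω') (g : Ω' → ℝ) :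
    ((uniformOfFintype Ω).bind f).expect g = (Fintype.card Ω : ℝ)⁻¹ * ∑ a, (f a).expect g := by
  simp [expect_bind, uniformOfFintype_apply, mul_sum]

lemma bind_uniformOfFintype_comp_perm [Nonempty Ω] (σ : Equiv.Perm Ω) (f : Ω → PMF Ω') :
    (uniformOfFintype Ω).bind (f ∘ σ) = (uniformOfFintype Ω).bind f := by
  ext b
  simp only [bind_apply, uniformOfFintype_apply, comp_apply]
  exact σ.tsum_eq fun a => (Fintype.card Ω : ℝ≥0∞)⁻¹ * f a b

lemma expect_mono_of_support {μ : PMF Ω} {g g' : Ω → ℝ} (h : ∀ a ∈ μ.support, g a ≤ g' a) :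
    μ.expect g ≤ μ.expect g' := by
  refine sum_le_sum fun a _ => ?_
  by_cases ha : a ∈ μ.support
  · exact mul_le_mul_of_nonneg_left (h a ha) ENNReal.toReal_nonneg
  · simp [(mem_support_iff μ a).not_left.1 ha]

lemma expect_iter_le (f : Ω → PMF Ω) {P : Ω → Prop} (hP : ∀ x, P x → ∀ y ∈ (f x).support, P y)
    {g : Ω → ℝ} {β : ℝ} (hβ : 0 ≤ β) (hg : ∀ x, P x → (f x).expect g ≤ β * g x) :
    ∀ T x, P x → (iter f T x).expect g ≤ β ^ T * g x
  | 0, x, _ => by classical simp [iter, expect_pure]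
  | T + 1, x, hx => by
    classical
    calc (iter f (T + 1) x).expect g
        = (f x).expect fun y => (iter f T y).expect g := by rw [iter_succ', expect_bind]; rfl
      _ ≤ (f x).expect fun y => β ^ T * g y :=
        expect_mono_of_support fun y hy => expect_iter_le f hP hβ hg T y (hP x hx y hy)
      _ = β ^ T * (f x).expect g := by
          rw [expect, expect, mul_sum]; exact sum_congr rfl fun _ _ => by ring
      _ ≤ β ^ T * (β * g x) := mul_le_mul_of_nonneg_left (hg x hx) (pow_nonneg hβ T)
      _ = β ^ (T + 1) * g x := by ring

end PMF

lemma sum_abs_ite_eq_sub_ite_eq {Ω : Type*} [Fintype Ω] [DecidableEq Ω] (x y : Ω) :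
    ∑ a, |(if a = x then (1 : ℝ) else 0) - if a = y then 1 else 0| =
      2 * if x = y then 0 else 1 := by
  by_cases hxy : x = y
  · simp [hxy]
  · have h : ∀ a, |(if a = x then (1 : ℝ) else 0) - if a = y then 1 else 0| =
        (if a = x then 1 else 0) + if a = y then 1 else 0 := by
      intro a; by_cases hx : a = x <;> by_cases hy : a = y <;> simp_all
    simp only [h, sum_add_distrib, sum_ite_eq', mem_univ, if_true, hxy, if_false]
    norm_num

theorem TV_map_fst_map_snd_le {Ω : Type*} [Fintype Ω] [DecidableEq Ω] (κ : PMF (Ω × Ω)) :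
    TV (κ.map Prod.fst) (κ.map Prod.snd) ≤ κ.expect fun q => if q.1 = q.2 then 0 else 1 := by
  calc TV (κ.map Prod.fst) (κ.map Prod.snd)
      = 1 / 2 * ∑ a, |∑ q, (κ q).toReal *
          ((if a = q.1 then 1 else 0) - if a = q.2 then 1 else 0)| := by
        simp_rw [TV, tsum_fintype, PMF.toReal_map_apply, mul_sub, sum_sub_distrib]
    _ ≤ 1 / 2 * ∑ a, ∑ q, (κ q).toReal *
          |(if a = q.1 then 1 else 0) - if a = q.2 then 1 else 0| := by
        gcongr with a
        refine (abs_sum_le_sum_abs _ _).trans_eq (sum_congr rfl fun q _ => ?_)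
        rw [abs_mul, abs_of_nonneg ENNReal.toReal_nonneg]
    _ = κ.expect fun q => if q.1 = q.2 then 0 else 1 := by
        simp_rw [sum_comm (γ := Ω), ← mul_sum, sum_abs_ite_eq_sub_ite_eq, PMF.expect, mul_sum]
        exact sum_congr rfl fun q _ => by ring

section MatchingPerm

variable {α : Type*} [DecidableEq α]

theorem exists_perm_card_filter_notMem_le (s t : Finset α) (hst : Disjoint s t) :
    ∃ σ : Equiv.Perm α, (∀ c, c ∉ s → c ∉ t → σ c = c) ∧ #{c ∈ s | σ c ∉ t} ≤ #s - #t := by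
  induction s using Finset.induction_on generalizing t with
  | empty => exact ⟨1, fun _ _ _ => rfl, (card_filter_le _ _).trans (by simp)⟩
  | insert a s ha ih =>
    obtain rfl | ⟨b, hb⟩ := t.eq_empty_or_nonempty
    · exact ⟨1, fun _ _ _ => rfl, (card_filter_le _ _).trans (by simp)⟩
    have hat : a ∉ t := disjoint_left.1 hst (mem_insert_self a s)
    have hbs : b ∉ s := fun h => disjoint_left.1 hst (mem_insert_of_mem h) hb
    obtain ⟨σ, hfix, hcard⟩ :=
      ih (t.erase b) (disjoint_of_subset_left (subset_insert a s) hst |>.mono_right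
        (erase_subset b t))
    have hσa : σ a = a := hfix a ha fun h => hat (mem_of_mem_erase h)
    have hσb : σ b = b := hfix b hbs (notMem_erase b t)
    refine ⟨Equiv.swap a b * σ, fun c hcs hct => ?_, ?_⟩
    · rw [mem_insert, not_or] at hcs
      rw [Equiv.Perm.mul_apply, hfix c hcs.2 fun h => hct (mem_of_mem_erase h),
        Equiv.swap_apply_of_ne_of_ne hcs.1 fun h => hct (h ▸ hb)]
    · have hsub : {c ∈ insert a s | (Equiv.swap a b * σ) c ∉ t} ⊆ {c ∈ s | σ c ∉ t.erase b} := by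
        intro c hc
        rw [mem_filter, mem_insert, Equiv.Perm.mul_apply] at hc
        obtain ⟨rfl | hcs, hct⟩ := hc
        · rw [hσa, Equiv.swap_apply_left] at hct
          exact absurd hb hct
        · have hca : σ c ≠ a := fun h => ha (σ.injective (h.trans hσa.symm) ▸ hcs)
          have hcb : σ c ≠ b := fun h => hbs (σ.injective (h.trans hσb.symm) ▸ hcs)
          rw [Equiv.swap_apply_of_ne_of_ne hca hcb] at hct
          exact mem_filter.2 ⟨hcs, fun h => hct (mem_of_mem_erase h)⟩
      have := card_le_card hsub
      rw [card_erase_of_mem hb] at hcard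
      rw [card_insert_of_notMem ha]
      have := card_pos.2 ⟨b, hb⟩
      omega

noncomputable def matchingPerm (A B : Finset α) : Equiv.Perm α :=
  (exists_perm_card_filter_notMem_le (A \ B) (B \ A) disjoint_sdiff_sdiff).choose

lemma matchingPerm_apply_of_notMem {A B : Finset α} {c : α} (hA : c ∉ A \ B) (hB : c ∉ B \ A) :
    matchingPerm A B c = c :=
  (exists_perm_card_filter_notMem_le (A \ B) (B \ A) disjoint_sdiff_sdiff).choose_spec.1 c hA hB

lemma card_filter_matchingPerm_notMem_le (A B : Finset α) :
    #{c ∈ A \ B | matchingPerm A B c ∉ B \ A} ≤ #(A \ B) - #(B \ A) :=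
  (exists_perm_card_filter_notMem_le (A \ B) (B \ A) disjoint_sdiff_sdiff).choose_spec.2

variable [Fintype α]

-- At a valid colouring with colour `p` and forbidden colours `A` at a vertex, a Glauber move
-- proposing the colour `c` leaves the colour `if c ∈ A then p else c` there.
theorem card_filter_ite_ne_ite_matchingPerm_le_max (A B : Finset α) (p : α) :
    #{c | (if c ∈ A then p else c) ≠
      if matchingPerm A B c ∈ B then p else matchingPerm A B c} ≤ max #(A \ B) #(B \ A) := by
  set σ := matchingPerm A B
  have hfix : ∀ c, c ∉ A \ B → c ∉ B \ A → σ c = c := fun _ => matchingPerm_apply_of_notMem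
  have hsub : ({c | (if c ∈ A then p else c) ≠ if σ c ∈ B then p else σ c} : Finset α) ⊆
      (B \ A) ∪ {c ∈ A \ B | σ c ∉ B \ A} := by
    intro c hc
    simp only [mem_filter, mem_univ, true_and] at hc
    by_cases hcA : c ∈ A <;> by_cases hcB : c ∈ B
    · rw [hfix c (by simp [hcB]) (by simp [hcA])] at hc
      simp [hcA, hcB] at hc
    · refine mem_union_right _ (mem_filter.2 ⟨mem_sdiff.2 ⟨hcA, hcB⟩, fun h => hc ?_⟩)
      rw [if_pos hcA, if_pos (mem_sdiff.1 h).1]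
    · exact mem_union_left _ (mem_sdiff.2 ⟨hcB, hcA⟩)
    · rw [hfix c (by simp [hcA]) (by simp [hcB])] at hc
      simp [hcA, hcB] at hc
  have hσ : #{c ∈ A \ B | σ c ∉ B \ A} ≤ #(A \ B) - #(B \ A) :=
    card_filter_matchingPerm_notMem_le A B
  have := (card_le_card hsub).trans (card_union_le _ _)
  omega

theorem card_filter_ite_ne_ite_matchingPerm_le_card_union (A B : Finset α) (p q : α) :
    #{c | (if c ∈ A then p else c) ≠
      if matchingPerm A B c ∈ B then q else matchingPerm A B c} ≤ #(A ∪ B) := by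
  refine card_le_card fun c hc => ?_
  by_contra hAB
  rw [mem_union, not_or] at hAB
  rw [mem_filter, matchingPerm_apply_of_notMem (by simp [hAB.1]) (by simp [hAB.2])] at hc
  simp [hAB.1, hAB.2] at hc

end MatchingPerm

theorem hammingDist_update_add {ι : Type*} {β : ι → Type*} [Fintype ι] [DecidableEq ι]
    [∀ i, DecidableEq (β i)] (x y : ∀ i, β i) (i : ι) (a b : β i) :
    hammingDist (update x i a) (update y i b) + (if x i ≠ y i then 1 else 0) =
      hammingDist x y + if a ≠ b then 1 else 0 := by
  have hrest : ∑ j ∈ univ.erase i, (if update x i a j ≠ update y i b j then 1 else 0) =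
      ∑ j ∈ univ.erase i, if x j ≠ y j then 1 else 0 :=
    sum_congr rfl fun j hj => by rw [update_of_ne (ne_of_mem_erase hj),
      update_of_ne (ne_of_mem_erase hj)]
  simp only [hammingDist, card_filter]
  rw [← add_sum_erase _ _ (mem_univ i), ← add_sum_erase _ _ (mem_univ i), hrest,
    update_self, update_self]
  omega

section Glauber

variable {V C : Type*} [Fintype V] [DecidableEq C] (G : SimpleGraph V) [DecidableRel G.Adj]

def forbiddenColors (w : V → C) (v : V) : Finset C := (G.neighborFinset v).image w

variable {G}

lemma card_forbiddenColors_le {D : ℕ} (hdeg : ∀ v, G.degree v ≤ D) (x : V → C) (u : V) :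
    #(forbiddenColors G x u) ≤ D :=
  card_image_le.trans ((G.card_neighborFinset_eq_degree u).trans_le (hdeg u))

variable (G) in
lemma card_forbiddenColors_sdiff_le (x y : V → C) (u : V) :
    #(forbiddenColors G x u \ forbiddenColors G y u) ≤ #{v ∈ G.neighborFinset u | x v ≠ y v} := by
  refine (card_le_card (t := {v ∈ G.neighborFinset u | x v ≠ y v}.image x) fun c hc => ?_).trans
    card_image_le
  obtain ⟨hcx, hcy⟩ := mem_sdiff.1 hc
  obtain ⟨v, hv, rfl⟩ := mem_image.1 hcx
  exact mem_image.2 ⟨v, mem_filter.2 ⟨hv, fun h => hcy (mem_image.2 ⟨v, hv, h.symm⟩)⟩, rfl⟩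

lemma sum_card_filter_ne_le {D : ℕ} (hdeg : ∀ v, G.degree v ≤ D) (x y : V → C) :
    ∑ u, #{v ∈ G.neighborFinset u | x v ≠ y v} ≤ D * hammingDist x y := by
  have habove : ∀ u, {v ∈ G.neighborFinset u | x v ≠ y v} =
      bipartiteAbove G.Adj {v | x v ≠ y v} u := fun u => by
    ext v; simp [bipartiteAbove, and_comm]
  have hbelow : ∀ v, #(bipartiteBelow G.Adj univ v) = G.degree v := fun v => by
    rw [← G.card_neighborFinset_eq_degree, G.neighborFinset_eq_filter]
    simp [bipartiteBelow, G.adj_comm]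
  simp_rw [habove, sum_card_bipartiteAbove_eq_sum_card_bipartiteBelow, hbelow, hammingDist]
  exact (sum_le_sum fun v _ => hdeg v).trans_eq (by rw [sum_const, smul_eq_mul, mul_comm])

variable [DecidableEq V]

variable (G) in
def glauberMove (w : V → C) (v : V) (c : C) : V → C :=
  if validCol G (update w v c) then update w v c else w

variable {x y : V → C}

lemma validCol_update_iff (hx : validCol G x) (v : V) (c : C) :
    validCol G (update x v c) ↔ c ∉ forbiddenColors G x v := by
  simp only [forbiddenColors, mem_image, SimpleGraph.mem_neighborFinset, not_exists, not_and]
  constructor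
  · intro h u huv hc
    have := h v u huv
    rw [update_self, update_of_ne (G.ne_of_adj huv).symm] at this
    exact this hc.symm
  · intro h a b hab
    rcases eq_or_ne a v with rfl | ha
    · rw [update_self, update_of_ne (G.ne_of_adj hab).symm]
      exact fun hc => h b hab hc.symm
    · rcases eq_or_ne b v with rfl | hb
      · rw [update_self, update_of_ne ha]
        exact h a hab.symm
      · rw [update_of_ne ha, update_of_ne hb]
        exact hx a b hab

lemma glauberMove_eq_update (hx : validCol G x) (v : V) (c : C) :
    glauberMove G x v c = update x v (if c ∈ forbiddenColors G x v then x v else c) := by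
  by_cases hc : c ∈ forbiddenColors G x v <;> simp [glauberMove, validCol_update_iff hx, hc]

lemma validCol_glauberMove (hx : validCol G x) (v : V) (c : C) :
    validCol G (glauberMove G x v c) := by
  rw [glauberMove]
  split_ifs with h
  exacts [h, hx]

variable [Fintype C]

-- Stated with `k * [x u ≠ y u]` on the left: the gain `k - D` at a disagreeing `u` would
-- truncate in `ℕ`.
lemma sum_hammingDist_glauberMove_add_le {D : ℕ} (hdeg : ∀ v, G.degree v ≤ D)
    (hx : validCol G x) (hy : validCol G y) (u : V) :
    ∑ c, hammingDist (glauberMove G x u c)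
        (glauberMove G y u (matchingPerm (forbiddenColors G x u) (forbiddenColors G y u) c)) +
      Fintype.card C * (if x u ≠ y u then 1 else 0) ≤
    Fintype.card C * hammingDist x y + D * (if x u ≠ y u then 1 else 0) +
      #{v ∈ G.neighborFinset u | x v ≠ y v} := by
  set A := forbiddenColors G x u
  set B := forbiddenColors G y u
  set σ := matchingPerm A B
  have hcount : ∑ c, hammingDist (glauberMove G x u c) (glauberMove G y u (σ c)) +
      Fintype.card C * (if x u ≠ y u then 1 else 0) = Fintype.card C * hammingDist x y +
        #{c | (if c ∈ A then x u else c) ≠ if σ c ∈ B then y u else σ c} := by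
    simp_rw [glauberMove_eq_update hx, glauberMove_eq_update hy, card_filter, ← card_univ,
      ← smul_eq_mul, ← sum_const, ← sum_add_distrib, hammingDist_update_add]
    rfl
  have hAB : #(A \ B) ≤ #{v ∈ G.neighborFinset u | x v ≠ y v} :=
    card_forbiddenColors_sdiff_le G x y u
  have hBA : #(B \ A) ≤ #{v ∈ G.neighborFinset u | x v ≠ y v} := by
    simpa only [ne_comm] using card_forbiddenColors_sdiff_le G y x u
  rw [hcount, add_assoc]
  refine Nat.add_le_add_left ?_ _
  by_cases hxy : x u = y u
  · have : #{c | (if c ∈ A then x u else c) ≠ if σ c ∈ B then y u else σ c} ≤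
        max #(A \ B) #(B \ A) := hxy ▸ card_filter_ite_ne_ite_matchingPerm_le_max A B (x u)
    rw [if_neg (not_not.2 hxy)]
    omega
  · have hA : #A ≤ D := card_forbiddenColors_le hdeg x u
    have : #{c | (if c ∈ A then x u else c) ≠ if σ c ∈ B then y u else σ c} ≤ #(A ∪ B) :=
      card_filter_ite_ne_ite_matchingPerm_le_card_union A B (x u) (y u)
    rw [union_comm, ← card_sdiff_add_card] at this
    rw [if_pos hxy]
    omega

lemma sum_sum_hammingDist_glauberMove_add_le {D : ℕ} (hdeg : ∀ v, G.degree v ≤ D)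
    (hx : validCol G x) (hy : validCol G y) :
    ∑ u, ∑ c, hammingDist (glauberMove G x u c)
        (glauberMove G y u (matchingPerm (forbiddenColors G x u) (forbiddenColors G y u) c)) +
      Fintype.card C * hammingDist x y ≤
    (Fintype.card C * Fintype.card V + 2 * D) * hammingDist x y := by
  have hd : hammingDist x y = ∑ u, if x u ≠ y u then 1 else 0 := card_filter _ _
  have hsum := sum_le_sum fun u (_ : u ∈ univ) => sum_hammingDist_glauberMove_add_le hdeg hx hy u
  simp only [sum_add_distrib, ← mul_sum, ← hd, sum_const, card_univ, smul_eq_mul] at hsum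
  have := sum_card_filter_ne_le hdeg x y
  nlinarith

variable [Nonempty V] [Nonempty C]

variable (G) in
noncomputable def glauberCoupling (p : (V → C) × (V → C)) : PMF ((V → C) × (V → C)) :=
  (PMF.uniformOfFintype V).bind fun u => (PMF.uniformOfFintype C).bind fun c =>
    PMF.pure (glauberMove G p.1 u c,
      glauberMove G p.2 u (matchingPerm (forbiddenColors G p.1 u) (forbiddenColors G p.2 u) c))

lemma map_fst_glauberCoupling (p : (V → C) × (V → C)) :
    (glauberCoupling G p).map Prod.fst = glauberStep G p.1 := by
  simp only [glauberCoupling, PMF.map_bind, PMF.pure_map]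
  rfl

lemma map_snd_glauberCoupling (p : (V → C) × (V → C)) :
    (glauberCoupling G p).map Prod.snd = glauberStep G p.2 := by
  simp only [glauberCoupling, PMF.map_bind, PMF.pure_map]
  congr 1
  funext u
  exact PMF.bind_uniformOfFintype_comp_perm _ fun c => PMF.pure (glauberMove G p.2 u c)

lemma validCol_of_mem_support_glauberCoupling {p q : (V → C) × (V → C)}
    (hp : validCol G p.1 ∧ validCol G p.2) (hq : q ∈ (glauberCoupling G p).support) :
    validCol G q.1 ∧ validCol G q.2 := by
  simp only [glauberCoupling, PMF.support_bind, PMF.support_pure, Set.mem_iUnion,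
    Set.mem_singleton_iff] at hq
  obtain ⟨u, -, c, -, rfl⟩ := hq
  exact ⟨validCol_glauberMove hp.1 u c, validCol_glauberMove hp.2 u _⟩

lemma expect_hammingDist_glauberCoupling_le {D : ℕ} (hdeg : ∀ v, G.degree v ≤ D)
    {p : (V → C) × (V → C)} (hx : validCol G p.1) (hy : validCol G p.2) :
    (glauberCoupling G p).expect (fun q => hammingDist q.1 q.2) ≤
      (1 - 1 / (Fintype.card V : ℝ) + 2 * D / ((Fintype.card C : ℝ) * (Fintype.card V : ℝ))) *
        hammingDist p.1 p.2 := by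
  have hn : (0 : ℝ) < Fintype.card V := by exact_mod_cast Fintype.card_pos
  have hk : (0 : ℝ) < Fintype.card C := by exact_mod_cast Fintype.card_pos
  have key : ((∑ u, ∑ c, hammingDist (glauberMove G p.1 u c) (glauberMove G p.2 u
      (matchingPerm (forbiddenColors G p.1 u) (forbiddenColors G p.2 u) c)) : ℕ) : ℝ) +
      Fintype.card C * hammingDist p.1 p.2 ≤
      (Fintype.card C * Fintype.card V + 2 * D) * hammingDist p.1 p.2 := by
    exact_mod_cast sum_sum_hammingDist_glauberMove_add_le hdeg hx hy
  simp_rw [glauberCoupling, PMF.expect_bind_uniformOfFintype, PMF.expect_pure, ← mul_sum]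
  push_cast at key
  rw [inv_mul_le_iff₀ hn, inv_mul_le_iff₀ hk]
  have hrate : (Fintype.card C : ℝ) * (Fintype.card V * ((1 - 1 / (Fintype.card V : ℝ) +
      2 * D / ((Fintype.card C : ℝ) * Fintype.card V)) * hammingDist p.1 p.2)) =
      (Fintype.card C * Fintype.card V + 2 * D) * hammingDist p.1 p.2 -
        Fintype.card C * hammingDist p.1 p.2 := by
    field_simp
    ring
  linarith

end Glauber

lemma glauberRate_nonneg {n k D : ℝ} (hn : 1 ≤ n) (hk : 0 ≤ k) (hD : 0 ≤ D) :
    0 ≤ 1 - 1 / n + 2 * D / (k * n) := by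
  have : 1 / n ≤ 1 := div_le_one_of_le₀ hn (by positivity)
  have : 0 ≤ 2 * D / (k * n) := by positivity
  linarith

lemma glauberRate_lt_one {n k D : ℝ} (hn : 0 < n) (hD : 0 ≤ D) (hk : 2 * D < k) :
    1 - 1 / n + 2 * D / (k * n) < 1 := by
  have : 2 * D / (k * n) < 1 / n := by
    rw [div_lt_div_iff₀ (by nlinarith) hn]
    nlinarith
  linarith

/-- Rapid mixing of the Glauber dynamics when `k ≥ 2D + 1`: with
`β = 1 - 1/n + 2D/(kn) < 1`, the `T`-step distributions from any two valid colorings are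
within total variation distance `β ^ T * n`. -/
theorem glauber_rapid_mixing {V C : Type*} [Fintype V] [Nonempty V] [DecidableEq V]
    [Fintype C] [Nonempty C] [DecidableEq C]
    (G : SimpleGraph V) [DecidableRel G.Adj] (D : ℕ)
    (hdeg : ∀ v, G.degree v ≤ D) (hk : 2 * D + 1 ≤ Fintype.card C) :
    (1 - 1 / (Fintype.card V : ℝ) +
        2 * D / ((Fintype.card C : ℝ) * (Fintype.card V : ℝ))) < 1 ∧
      ∀ (T : ℕ) (w₁ w₂ : V → C), validCol G w₁ → validCol G w₂ →
        TV (iter (glauberStep G) T w₁) (iter (glauberStep G) T w₂) ≤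
          (1 - 1 / (Fintype.card V : ℝ) +
              2 * D / ((Fintype.card C : ℝ) * (Fintype.card V : ℝ))) ^ T *
            (Fintype.card V : ℝ) := by
  set β := 1 - 1 / (Fintype.card V : ℝ) + 2 * D / ((Fintype.card C : ℝ) * Fintype.card V)
  have hn : (1 : ℝ) ≤ Fintype.card V := by exact_mod_cast Fintype.card_pos
  have h2D : 2 * (D : ℝ) < Fintype.card C := by exact_mod_cast hk
  have hβ₀ : 0 ≤ β := glauberRate_nonneg hn (by positivity) D.cast_nonneg
  refine ⟨glauberRate_lt_one (by positivity) D.cast_nonneg h2D, fun T w₁ w₂ h₁ h₂ => ?_⟩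
  set κ := iter (glauberCoupling G) T (w₁, w₂)
  calc TV (iter (glauberStep G) T w₁) (iter (glauberStep G) T w₂)
      = TV (κ.map Prod.fst) (κ.map Prod.snd) := by
        rw [PMF.map_iter map_fst_glauberCoupling, PMF.map_iter map_snd_glauberCoupling]
    _ ≤ κ.expect fun q => if q.1 = q.2 then 0 else 1 := TV_map_fst_map_snd_le κ
    _ ≤ κ.expect fun q => hammingDist q.1 q.2 := PMF.expect_mono_of_support fun q _ => by
        split_ifs with h
        · positivity
        · exact_mod_cast hammingDist_pos.2 h
    _ ≤ β ^ T * hammingDist w₁ w₂ :=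
        PMF.expect_iter_le _ (P := fun p => validCol G p.1 ∧ validCol G p.2)
          (fun _ hp _ hq => validCol_of_mem_support_glauberCoupling hp hq) hβ₀
          (fun _ hp => expect_hammingDist_glauberCoupling_le hdeg hp.1 hp.2) T _ ⟨h₁, h₂⟩
    _ ≤ β ^ T * Fintype.card V := by
        gcongr
        exact_mod_cast hammingDist_le_card_fintype
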